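/- If P_1 satisfies A_1^T P_1 + P_1 A_1 + Q_1 - P_1 B_1 R_1^{-1} B_1^T P_1 + U_1 = 0, then with A_⊕ = ⊕_{i=1}^m A_i, P_⊗ = P_1 ⊗ M_2 ⊗ ... ⊗ M_m, Q_⊗ = Q_1 ⊗ M_2 ⊗ ... ⊗ M_m − P_1 ⊗ Σ_{i=2}^m (M_2 ⊗ ... ⊗ F_i ⊗ ... ⊗ M_m) where F_i = A_i^T M_i + M_i A_i, B_⊗ = B_1 ⊗ I ⊗ ... ⊗ I, R_⊗ = R_1 ⊗ M_2 ⊗ ... ⊗ M_m, and V = U_1 ⊗ M_2 ⊗ ... ⊗ M_m, the generalized Riccati identity holds: A_⊕^T P_⊗ + P_⊗ A_⊕ + Q_⊗ − P_⊗ B_⊗ R_⊗^{-1} B_⊗^T P_⊗ + V = 0. -/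
import Mathlib


open Matrix
open scoped Kronecker

/-- Kronecker product of a family of matrices, realized over Pi index types. -/
noncomputable def kronFam {m : ℕ} {p q : Fin m → Type*} [∀ i, Fintype (p i)]
    (X : ∀ i, Matrix (p i) (q i) ℝ) : Matrix (∀ i, p i) (∀ i, q i) ℝ :=
  Matrix.of fun a b => ∏ i, X i (a i) (b i)

/-- Kronecker sum of a family: `⊕ᵢ Aᵢ = Σᵢ I ⊗ ⋯ ⊗ Aᵢ ⊗ ⋯ ⊗ I`. -/
noncomputable def kronSum {m : ℕ} {n : Fin m → Type*} [∀ i, Fintype (n i)] [∀ i, DecidableEq (n i)]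
    (A : ∀ i, Matrix (n i) (n i) ℝ) : Matrix (∀ i, n i) (∀ i, n i) ℝ :=
  ∑ i, kronFam (Function.update (fun j => (1 : Matrix (n j) (n j) ℝ)) i (A i))

section aux

variable {m : ℕ} {n : Fin m → Type*} [∀ i, Fintype (n i)] [∀ i, DecidableEq (n i)]

lemma kronFam_mul {p q r : Fin m → Type*} [∀ i, Fintype (p i)] [∀ i, Fintype (q i)]
    [∀ i, Fintype (r i)]
    (X : ∀ i, Matrix (p i) (q i) ℝ) (Y : ∀ i, Matrix (q i) (r i) ℝ) :
    kronFam X * kronFam Y = kronFam (fun i => X i * Y i) := by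
  ext a b
  simp only [kronFam, Matrix.mul_apply, Matrix.of_apply]
  rw [← Fintype.piFinset_univ, Finset.prod_univ_sum]
  exact Finset.sum_congr rfl fun c _ => (Finset.prod_mul_distrib).symm

lemma kronFam_one : kronFam (fun i => (1 : Matrix (n i) (n i) ℝ)) = 1 := by
  ext a b
  simp only [kronFam, Matrix.of_apply, Matrix.one_apply]
  rw [Finset.prod_boole]
  simp [funext_iff]

lemma kronFam_transpose {p q : Fin m → Type*} [∀ i, Fintype (p i)] [∀ i, Fintype (q i)]
    (X : ∀ i, Matrix (p i) (q i) ℝ) :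
    (kronFam X)ᵀ = kronFam (fun i => (X i)ᵀ) := rfl

lemma kronFam_update_apply (M : ∀ i, Matrix (n i) (n i) ℝ) (i : Fin m)
    (X : Matrix (n i) (n i) ℝ) (a b : ∀ i, n i) :
    kronFam (Function.update M i X) a b
      = X (a i) (b i) * ∏ j ∈ Finset.univ.erase i, M j (a j) (b j) := by
  simp only [kronFam, Matrix.of_apply]
  rw [← Finset.mul_prod_erase _ _ (Finset.mem_univ i)]
  congr 1
  · simp
  · exact Finset.prod_congr rfl fun j hj => by
      rw [Function.update_of_ne (Finset.ne_of_mem_erase hj)]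

lemma kronFam_update_add (M : ∀ i, Matrix (n i) (n i) ℝ) (i : Fin m)
    (X Y : Matrix (n i) (n i) ℝ) :
    kronFam (Function.update M i (X + Y))
      = kronFam (Function.update M i X) + kronFam (Function.update M i Y) := by
  ext a b
  simp [kronFam_update_apply, add_mul]

lemma update_one_mul (M : ∀ i, Matrix (n i) (n i) ℝ) (i : Fin m)
    (X : Matrix (n i) (n i) ℝ) :
    (fun j => Function.update (fun k => (1 : Matrix (n k) (n k) ℝ)) i X j * M j)
      = Function.update M i (X * M i) := by
  funext j
  rcases eq_or_ne j i with rfl | h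
  · simp
  · simp [Function.update_of_ne h]

lemma mul_update_one (M : ∀ i, Matrix (n i) (n i) ℝ) (i : Fin m)
    (X : Matrix (n i) (n i) ℝ) :
    (fun j => M j * Function.update (fun k => (1 : Matrix (n k) (n k) ℝ)) i X j)
      = Function.update M i (M i * X) := by
  funext j
  rcases eq_or_ne j i with rfl | h
  · simp
  · simp [Function.update_of_ne h]

lemma kronSum_transpose (A : ∀ i, Matrix (n i) (n i) ℝ) :
    (kronSum A)ᵀ
      = ∑ i, kronFam (Function.update (fun j => (1 : Matrix (n j) (n j) ℝ)) i (A i)ᵀ) := by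
  simp only [kronSum, Matrix.transpose_sum, kronFam_transpose]
  refine Finset.sum_congr rfl fun i _ => congrArg kronFam (funext fun j => ?_)
  rcases eq_or_ne j i with rfl | h
  · simp
  · simp [Function.update_of_ne h]

/-- the key identity `Sᵀ K + K S = Σᵢ M₂ ⊗ ⋯ ⊗ Fᵢ ⊗ ⋯ ⊗ Mₘ`. -/
lemma key (A M : ∀ i, Matrix (n i) (n i) ℝ) :
    (kronSum A)ᵀ * kronFam M + kronFam M * kronSum A
      = ∑ i, kronFam (Function.update M i ((A i)ᵀ * M i + M i * A i)) := by
  rw [kronSum_transpose, kronSum, Finset.sum_mul, Finset.mul_sum, ← Finset.sum_add_distrib]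
  refine Finset.sum_congr rfl fun i _ => ?_
  rw [kronFam_mul, kronFam_mul, update_one_mul, mul_update_one, kronFam_update_add]

end aux

/-- Layer 1 (with the modified ARE) is explicit; layers 2,…,m are the families `A, M`. -/
theorem stmt12 {n₁ p₁ : Type*} [Fintype n₁] [Fintype p₁] [DecidableEq n₁] [DecidableEq p₁]
    {m : ℕ} {n : Fin m → Type*} [∀ i, Fintype (n i)] [∀ i, DecidableEq (n i)]
    (A₁ P₁ Q₁ U₁ : Matrix n₁ n₁ ℝ) (B₁ : Matrix n₁ p₁ ℝ) (R₁ : Matrix p₁ p₁ ℝ)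
    (A M : ∀ i, Matrix (n i) (n i) ℝ)
    (hP₁ : P₁.IsHermitian) (hQ₁ : Q₁.IsHermitian) (hU₁ : U₁.IsHermitian)
    (hR₁ : IsUnit R₁.det) (hM : ∀ i, IsUnit (M i).det) (hMs : ∀ i, (M i).IsHermitian)
    (hRic : A₁ᵀ * P₁ + P₁ * A₁ + Q₁ - P₁ * B₁ * R₁⁻¹ * B₁ᵀ * P₁ + U₁ = 0) :
    (A₁ ⊗ₖ (1 : Matrix (∀ i, n i) (∀ i, n i) ℝ) + (1 : Matrix n₁ n₁ ℝ) ⊗ₖ kronSum A)ᵀ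
          * (P₁ ⊗ₖ kronFam M)
      + (P₁ ⊗ₖ kronFam M)
          * (A₁ ⊗ₖ (1 : Matrix (∀ i, n i) (∀ i, n i) ℝ) + (1 : Matrix n₁ n₁ ℝ) ⊗ₖ kronSum A)
      + (Q₁ ⊗ₖ kronFam M
          - P₁ ⊗ₖ (∑ i, kronFam (Function.update M i ((A i)ᵀ * M i + M i * A i))))
      - (P₁ ⊗ₖ kronFam M) * (B₁ ⊗ₖ (1 : Matrix (∀ i, n i) (∀ i, n i) ℝ))
          * (R₁ ⊗ₖ kronFam M)⁻¹ * (B₁ ⊗ₖ (1 : Matrix (∀ i, n i) (∀ i, n i) ℝ))ᵀ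
          * (P₁ ⊗ₖ kronFam M)
      + U₁ ⊗ₖ kronFam M
      = 0 := by
  set S := kronSum A with hS
  set K := kronFam M with hK
  set Kinv := kronFam (fun i => (M i)⁻¹) with hKi
  have hKinv : K * Kinv = 1 := by
    rw [hK, hKi, kronFam_mul]
    have : (fun i => M i * (M i)⁻¹) = fun i => (1 : Matrix (n i) (n i) ℝ) := by
      funext i; exact Matrix.mul_nonsing_inv _ (hM i)
    rw [this, kronFam_one]
  have hK' : K⁻¹ = Kinv := Matrix.inv_eq_right_inv hKinv
  -- transpose expansion
  rw [Matrix.transpose_add, ← Matrix.kroneckerMap_transpose, ← Matrix.kroneckerMap_transpose,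
    ← Matrix.kroneckerMap_transpose, Matrix.transpose_one, Matrix.transpose_one,
    Matrix.inv_kronecker, hK']
  set E := P₁ * B₁ * R₁⁻¹ * B₁ᵀ * P₁ with hE
  have h1 : (A₁ᵀ ⊗ₖ (1 : Matrix (∀ i, n i) (∀ i, n i) ℝ)
        + (1 : Matrix n₁ n₁ ℝ) ⊗ₖ Sᵀ) * (P₁ ⊗ₖ K)
      = (A₁ᵀ * P₁) ⊗ₖ K + P₁ ⊗ₖ (Sᵀ * K) := by
    rw [Matrix.add_mul, ← Matrix.mul_kronecker_mul, ← Matrix.mul_kronecker_mul]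
    simp only [Matrix.one_mul, Matrix.mul_one]
  have h2 : (P₁ ⊗ₖ K) * (A₁ ⊗ₖ (1 : Matrix (∀ i, n i) (∀ i, n i) ℝ)
        + (1 : Matrix n₁ n₁ ℝ) ⊗ₖ S)
      = (P₁ * A₁) ⊗ₖ K + P₁ ⊗ₖ (K * S) := by
    rw [Matrix.mul_add, ← Matrix.mul_kronecker_mul, ← Matrix.mul_kronecker_mul]
    simp only [Matrix.one_mul, Matrix.mul_one]
  have h3 : (P₁ ⊗ₖ K) * (B₁ ⊗ₖ (1 : Matrix (∀ i, n i) (∀ i, n i) ℝ))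
        * (R₁⁻¹ ⊗ₖ Kinv) * (B₁ᵀ ⊗ₖ (1 : Matrix (∀ i, n i) (∀ i, n i) ℝ)) * (P₁ ⊗ₖ K)
      = E ⊗ₖ K := by
    simp only [← Matrix.mul_kronecker_mul, Matrix.mul_one]
    rw [hE]
    congr 1
    rw [hKinv, Matrix.one_mul]
  have hT : P₁ ⊗ₖ (∑ i, kronFam (Function.update M i ((A i)ᵀ * M i + M i * A i)))
      = P₁ ⊗ₖ (Sᵀ * K) + P₁ ⊗ₖ (K * S) := by
    rw [← key A M, Matrix.kronecker_add]
  rw [h1, h2, h3, hT]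
  have hsub : ∀ (X Y : Matrix n₁ n₁ ℝ), (X - Y) ⊗ₖ K = X ⊗ₖ K - Y ⊗ₖ K := fun X Y => by
    ext a b
    simp [Matrix.kroneckerMap_apply, Matrix.sub_apply, sub_mul]
  have habel : (A₁ᵀ * P₁) ⊗ₖ K + P₁ ⊗ₖ (Sᵀ * K) + ((P₁ * A₁) ⊗ₖ K + P₁ ⊗ₖ (K * S))
      + (Q₁ ⊗ₖ K - (P₁ ⊗ₖ (Sᵀ * K) + P₁ ⊗ₖ (K * S))) - E ⊗ₖ K + U₁ ⊗ₖ K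
      = (A₁ᵀ * P₁) ⊗ₖ K + (P₁ * A₁) ⊗ₖ K + Q₁ ⊗ₖ K - E ⊗ₖ K + U₁ ⊗ₖ K := by abel
  rw [habel, ← Matrix.add_kronecker, ← Matrix.add_kronecker, ← hsub, ← Matrix.add_kronecker,
    hRic, Matrix.zero_kronecker]
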